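/- Let u : ℝ × ℝ → ℝ be a C^∞ function, 2π-periodic in its first argument, such that for every t the function u(·,t) belongs to E_N (i.e. u(x,t) = Σ_{0<|n|≤N} c_n(t) e^{inx} with c_{−n} = conj(c_n)), and suppose u solves ∂_t u + ∂_x³ u = ℙ_N( ℙ(u³) ∂_x u ) for all (x,t). Then the L²-norm is conserved: the function t ↦ ∫₀^{2π} u(x,t)² dx is constant on ℝ. -/

import Mathlib

/-!
Differentiating under the integral sign, `d/dt ∫ u² = 2 ∫ u ∂ₜu`, and `∂ₜu = -∂ₓ³u + ℙ_N g`
with `g = ℙ(u³) ∂ₓu`. Periodicity kills `∫ u ∂ₓ³u` (a primitive is `u u'' - u'²/2`). Since `u`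
already lies in `E_N` and `ℙ_N` is self-adjoint, `∫ u ℙ_N g = ∫ u g`, and this vanishes too:
with `c` the mean of `u³`, `u (u³ - c) u'` is the derivative of the periodic `u⁵/5 - c u²/2`.
-/

open scoped Real

noncomputable def fourierCoefOn (w : ℝ → ℝ) (n : ℤ) : ℂ :=
  (1 / (2 * (π : ℂ))) * ∫ y in (0:ℝ)..(2 * π), (w y : ℂ) * Complex.exp (-(Complex.I * n * y))

open Function intervalIntegral MeasureTheory

theorem Function.Periodic.iteratedDeriv {f : ℝ → ℝ} {T : ℝ} (hf : Periodic f T) (n : ℕ) :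
    Periodic (iteratedDeriv n f) T := fun x => by
  rw [← congrFun (iteratedDeriv_comp_add_const n f T) x,
    show (fun z => f (z + T)) = f from funext hf]

theorem Function.Periodic.intervalIntegral_eq_zero_of_hasDerivAt {F f : ℝ → ℝ} {T : ℝ}
    (hF : Periodic F T) (hderiv : ∀ x, HasDerivAt F (f x) x) (hf : Continuous f) (a : ℝ) :
    ∫ x in a..a + T, f x = 0 := by
  rw [integral_eq_sub_of_hasDerivAt (fun x _ => hderiv x) (hf.intervalIntegrable _ _), hF a,
    sub_self]

section Periodic

variable {f : ℝ → ℝ} {T : ℝ}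

theorem integral_mul_iteratedDeriv_three_eq_zero (hf : ContDiff ℝ 3 f) (hper : Periodic f T)
    (a : ℝ) : ∫ x in a..a + T, f x * iteratedDeriv 3 f x = 0 := by
  have hD : ∀ n < 3, ∀ x, HasDerivAt (iteratedDeriv n f) (iteratedDeriv (n + 1) f x) x :=
    fun n hn x => by
      rw [iteratedDeriv_succ]
      exact (hf.differentiable_iteratedDeriv n (mod_cast hn) x).hasDerivAt
  have hprimitive : ∀ x, HasDerivAt
      (fun y => iteratedDeriv 0 f y * iteratedDeriv 2 f y - iteratedDeriv 1 f y ^ 2 / 2)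
      (iteratedDeriv 0 f x * iteratedDeriv 3 f x) x := fun x => by
    refine (((hD 0 (by norm_num) x).mul (hD 2 (by norm_num) x)).sub
      (((hD 1 (by norm_num) x).pow 2).div_const 2)).congr_deriv ?_
    norm_num
    ring
  have hperF : Periodic
      (fun y => iteratedDeriv 0 f y * iteratedDeriv 2 f y - iteratedDeriv 1 f y ^ 2 / 2) T :=
    fun y => by simp only [hper.iteratedDeriv _ y]
  simpa only [iteratedDeriv_zero] using
    hperF.intervalIntegral_eq_zero_of_hasDerivAt hprimitive
      ((hf.continuous_iteratedDeriv 0 (by norm_num)).mul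
        (hf.continuous_iteratedDeriv 3 le_rfl)) a

theorem integral_mul_pow_three_sub_mul_deriv_eq_zero (hf : ContDiff ℝ 1 f)
    (hper : Periodic f T) (c a : ℝ) :
    ∫ x in a..a + T, f x * ((f x ^ 3 - c) * deriv f x) = 0 := by
  have hD : ∀ x, HasDerivAt f (deriv f x) x := fun x =>
    (hf.differentiable one_ne_zero x).hasDerivAt
  have hprimitive : ∀ x, HasDerivAt (fun y => f y ^ 5 / 5 - c * (f y ^ 2 / 2))
      (f x * ((f x ^ 3 - c) * deriv f x)) x := fun x => by
    refine ((((hD x).pow 5).div_const 5).sub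
      ((((hD x).pow 2).div_const 2).const_mul c)).congr_deriv ?_
    push_cast
    ring
  have hperF : Periodic (fun y => f y ^ 5 / 5 - c * (f y ^ 2 / 2)) T := fun y => by
    simp only [hper y]
  exact hperF.intervalIntegral_eq_zero_of_hasDerivAt hprimitive
    (hf.continuous.mul ((hf.continuous.pow 3).sub continuous_const |>.mul
      (hf.continuous_deriv le_rfl))) a

end Periodic

theorem integral_mul_cexp_eq_fourierCoefOn_neg (w : ℝ → ℝ) (n : ℤ) :
    ∫ y in (0:ℝ)..2 * π, (w y : ℂ) * Complex.exp (Complex.I * n * y) =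
      2 * π * fourierCoefOn w (-n) := by
  have hπ : (2 * π : ℂ) ≠ 0 := by exact_mod_cast Real.two_pi_pos.ne'
  rw [fourierCoefOn, ← mul_assoc, mul_one_div_cancel hπ, one_mul]
  push_cast
  simp only [mul_neg, neg_mul, neg_neg]

theorem integral_mul_sum_cexp {w : ℝ → ℝ} (hw : Continuous w) (s : Finset ℤ) (a : ℤ → ℂ) :
    ∫ x in (0:ℝ)..2 * π, (w x : ℂ) * ∑ n ∈ s, a n * Complex.exp (Complex.I * n * x) =
      2 * π * ∑ n ∈ s, a n * fourierCoefOn w (-n) := by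
  have hterm : ∀ n : ℤ,
      Continuous fun x : ℝ => (w x : ℂ) * (a n * Complex.exp (Complex.I * n * x)) :=
    fun n => by fun_prop
  simp_rw [Finset.mul_sum]
  rw [integral_finsetSum fun n _ => (hterm n).intervalIntegrable _ _]
  refine Finset.sum_congr rfl fun n _ => ?_
  simp_rw [mul_left_comm _ (a n)]
  rw [intervalIntegral.integral_const_mul, integral_mul_cexp_eq_fourierCoefOn_neg, mul_left_comm]

theorem integral_mul_fourierTruncation_eq {s : Finset ℤ} (hs : ∀ n ∈ s, -n ∈ s)
    {f g h : ℝ → ℝ} (hf : Continuous f) (hg : Continuous g)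
    (hf_exp : ∀ x, (f x : ℂ) = ∑ n ∈ s, fourierCoefOn f n * Complex.exp (Complex.I * n * x))
    (hh : ∀ x, (h x : ℂ) = ∑ n ∈ s, fourierCoefOn g n * Complex.exp (Complex.I * n * x)) :
    ∫ x in (0:ℝ)..2 * π, f x * h x = ∫ x in (0:ℝ)..2 * π, f x * g x := by
  apply Complex.ofReal_injective
  simp only [← integral_ofReal, Complex.ofReal_mul]
  calc ∫ x in (0:ℝ)..2 * π, (f x : ℂ) * h x
      = 2 * π * ∑ n ∈ s, fourierCoefOn g n * fourierCoefOn f (-n) := by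
        simp_rw [hh]
        exact integral_mul_sum_cexp hf s _
    _ = 2 * π * ∑ n ∈ s, fourierCoefOn f n * fourierCoefOn g (-n) := by
        congr 1
        exact Finset.sum_nbij' Neg.neg Neg.neg hs hs (fun n _ => neg_neg n) (fun n _ => neg_neg n)
          fun n _ => by rw [neg_neg, mul_comm]
    _ = ∫ x in (0:ℝ)..2 * π, (f x : ℂ) * g x := by
        rw [← integral_mul_sum_cexp hg s]
        exact integral_congr fun x _ => by rw [hf_exp x, mul_comm]

theorem integral_mul_eq_zero_of_truncated_gkdv {s : Finset ℤ} (hs : ∀ n ∈ s, -n ∈ s)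
    {f v : ℝ → ℝ} (hf : ContDiff ℝ 3 f) (hper : Periodic f (2 * π)) (hv : Continuous v)
    (hf_exp : ∀ x, (f x : ℂ) = ∑ n ∈ s, fourierCoefOn f n * Complex.exp (Complex.I * n * x))
    (hPDE : ∀ x, ((v x + iteratedDeriv 3 f x : ℝ) : ℂ) =
      ∑ n ∈ s, fourierCoefOn (fun y =>
          (f y ^ 3 - (1 / (2 * π)) * ∫ z in (0:ℝ)..(2 * π), f z ^ 3) * deriv f y) n *
        Complex.exp (Complex.I * n * x)) :
    ∫ x in (0:ℝ)..2 * π, f x * v x = 0 := by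
  set c := (1 / (2 * π)) * ∫ z in (0:ℝ)..(2 * π), f z ^ 3
  have hf' : Continuous (iteratedDeriv 3 f) := hf.continuous_iteratedDeriv 3 le_rfl
  have hdual := integral_mul_fourierTruncation_eq (g := fun y => (f y ^ 3 - c) * deriv f y) hs
    hf.continuous ((hf.continuous.pow 3).sub continuous_const |>.mul
      (hf.continuous_deriv (by norm_num))) hf_exp hPDE
  have hdispersive := integral_mul_iteratedDeriv_three_eq_zero hf hper 0
  have hnonlinear := integral_mul_pow_three_sub_mul_deriv_eq_zero
    (hf.of_le (by norm_num)) hper c 0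
  rw [zero_add] at hdispersive hnonlinear
  calc ∫ x in (0:ℝ)..2 * π, f x * v x
      = (∫ x in (0:ℝ)..2 * π, f x * (v x + iteratedDeriv 3 f x)) -
          ∫ x in (0:ℝ)..2 * π, f x * iteratedDeriv 3 f x := by
        have hi₁ : IntervalIntegrable (fun x => f x * (v x + iteratedDeriv 3 f x)) volume 0
            (2 * π) := (hf.continuous.mul (hv.add hf')).intervalIntegrable _ _
        have hi₂ : IntervalIntegrable (fun x => f x * iteratedDeriv 3 f x) volume 0 (2 * π) :=
          (hf.continuous.mul hf').intervalIntegrable _ _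
        rw [← integral_sub hi₁ hi₂]
        exact integral_congr fun x _ => by ring
    _ = 0 := by rw [hdual, hnonlinear, hdispersive, sub_zero]

section Parametric

variable {F : ℝ → ℝ → ℝ}

theorem hasDerivAt_snd_of_differentiable (hF : Differentiable ℝ (uncurry F)) (x t : ℝ) :
    HasDerivAt (F x) (fderiv ℝ (uncurry F) (x, t) (0, 1)) t :=
  (hF (x, t)).hasFDerivAt.comp_hasDerivAt t ((hasDerivAt_const t x).prodMk (hasDerivAt_id t))

theorem differentiable_snd_of_differentiable (hF : Differentiable ℝ (uncurry F)) (x : ℝ) :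
    Differentiable ℝ (F x) := fun t =>
  (hasDerivAt_snd_of_differentiable hF x t).differentiableAt

theorem continuous_deriv_snd_of_contDiff (hF : ContDiff ℝ 1 (uncurry F)) :
    Continuous fun p : ℝ × ℝ => deriv (F p.1) p.2 := by
  simp_rw [fun p : ℝ × ℝ => (hasDerivAt_snd_of_differentiable
    (hF.differentiable one_ne_zero) p.1 p.2).deriv]
  exact (hF.continuous_fderiv one_ne_zero).clm_apply continuous_const

theorem hasDerivAt_intervalIntegral_of_contDiff (hF : ContDiff ℝ 1 (uncurry F)) (a b t₀ : ℝ) :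
    HasDerivAt (fun t => ∫ x in a..b, F x t) (∫ x in a..b, deriv (F x) t₀) t₀ := by
  have hderiv : ∀ x t, HasDerivAt (F x) (deriv (F x) t) t := fun x t =>
    (differentiable_snd_of_differentiable (hF.differentiable one_ne_zero) x t).hasDerivAt
  have hcont := continuous_deriv_snd_of_contDiff hF
  obtain ⟨M, hM⟩ := ((isCompact_uIcc (a := a) (b := b)).prod
    (isCompact_closedBall t₀ 1)).exists_bound_of_continuousOn hcont.continuousOn
  refine (intervalIntegral.hasDerivAt_integral_of_dominated_loc_of_deriv_le
    (F := fun t x => F x t) (F' := fun t x => deriv (F x) t) (bound := fun _ => M)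
    (Metric.ball_mem_nhds t₀ one_pos)
    (.of_forall fun t => (hF.continuous.comp (continuous_id.prodMk continuous_const))
      |>.aestronglyMeasurable)
    ((hF.continuous.comp (continuous_id.prodMk continuous_const)).intervalIntegrable _ _)
    (hcont.comp (continuous_id.prodMk continuous_const)).aestronglyMeasurable
    (.of_forall fun x hx t ht => hM (x, t)
      ⟨Set.uIoc_subset_uIcc hx, Metric.ball_subset_closedBall ht⟩)
    intervalIntegrable_const (.of_forall fun x _ t _ => hderiv x t)).2

end Parametric

theorem l2_conserved_truncated_gkdv_general (N : ℕ) (u : ℝ → ℝ → ℝ)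
    (hsmooth : ContDiff ℝ (⊤ : ℕ∞) (Function.uncurry u))
    (hper : ∀ x t : ℝ, u (x + 2 * π) t = u x t)
    (hEN : ∀ t x : ℝ, ((u x t : ℝ) : ℂ) =
      ∑ n ∈ (Finset.Icc (-(N : ℤ)) (N : ℤ)).erase 0,
        fourierCoefOn (fun y => u y t) n * Complex.exp (Complex.I * n * x))
    (hPDE : ∀ x t : ℝ,
      ((deriv (fun s => u x s) t + iteratedDeriv 3 (fun y => u y t) x : ℝ) : ℂ) =
        ∑ n ∈ (Finset.Icc (-(N : ℤ)) (N : ℤ)).erase 0,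
          fourierCoefOn (fun y =>
              (u y t ^ 3 - (1 / (2 * π)) * ∫ z in (0:ℝ)..(2 * π), u z t ^ 3) *
                deriv (fun w => u w t) y) n * Complex.exp (Complex.I * n * x)) :
    ∀ t₁ t₂ : ℝ,
      (∫ x in (0:ℝ)..(2 * π), u x t₁ ^ 2) = ∫ x in (0:ℝ)..(2 * π), u x t₂ ^ 2 := by
  have hC1 : ContDiff ℝ 1 (uncurry u) := hsmooth.of_le (by norm_cast)
  have hsection : ∀ t, ContDiff ℝ 3 fun x => u x t := fun t =>
    (hsmooth.comp (contDiff_id.prodMk contDiff_const)).of_le (by norm_cast)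
  have hdt : ∀ t, Continuous fun x => deriv (u x) t := fun t =>
    (continuous_deriv_snd_of_contDiff hC1).comp (continuous_id.prodMk continuous_const)
  have hsymm : ∀ n ∈ (Finset.Icc (-(N : ℤ)) N).erase 0, -n ∈ (Finset.Icc (-(N : ℤ)) N).erase 0 := by
    intro n hn
    simp only [Finset.mem_erase, Finset.mem_Icc] at hn ⊢
    omega
  have hL2 : ∀ t, HasDerivAt (fun t => ∫ x in (0:ℝ)..2 * π, u x t ^ 2) 0 t := fun t => by
    convert hasDerivAt_intervalIntegral_of_contDiff (F := fun x t => u x t ^ 2) (hC1.pow 2)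
      0 (2 * π) t using 1
    have hsq : ∀ x, deriv (fun s => u x s ^ 2) t = 2 * (u x t * deriv (u x) t) := fun x => by
      rw [deriv_fun_pow (differentiable_snd_of_differentiable (hC1.differentiable one_ne_zero) x t)]
      ring
    simp_rw [hsq, intervalIntegral.integral_const_mul]
    rw [integral_mul_eq_zero_of_truncated_gkdv hsymm (hsection t) (fun x => hper x t)
      (hdt t) (hEN t) (hPDE · t), mul_zero]
  exact fun t₁ t₂ => is_const_of_deriv_eq_zero (fun t => (hL2 t).differentiableAt)
    (fun t => (hL2 t).deriv) t₁ t₂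

/-- **Conservation of the L² norm for the truncated gauge-transformed quartic gKdV.**
Let `u : ℝ × ℝ → ℝ` be `C^∞`, `2π`-periodic in its first argument, with `u(·,t) ∈ E_N`
(a real trigonometric polynomial with frequencies `0 < |n| ≤ N`) for every `t`, solving
`∂ₜ u + ∂ₓ³ u = ℙ_N(ℙ(u³) ∂ₓ u)`.  Then `t ↦ ∫₀^{2π} u(x,t)² dx` is constant on `ℝ`. -/
theorem l2_conserved_truncated_gkdv (N : ℕ) (hN : 1 ≤ N) (u : ℝ → ℝ → ℝ)
    (hsmooth : ContDiff ℝ (⊤ : ℕ∞) (Function.uncurry u))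
    (hper : ∀ x t : ℝ, u (x + 2 * π) t = u x t)
    (hEN : ∀ t x : ℝ, ((u x t : ℝ) : ℂ) =
      ∑ n ∈ (Finset.Icc (-(N : ℤ)) (N : ℤ)).erase 0,
        fourierCoefOn (fun y => u y t) n * Complex.exp (Complex.I * n * x))
    (hPDE : ∀ x t : ℝ,
      ((deriv (fun s => u x s) t + iteratedDeriv 3 (fun y => u y t) x : ℝ) : ℂ) =
        ∑ n ∈ (Finset.Icc (-(N : ℤ)) (N : ℤ)).erase 0,
          fourierCoefOn (fun y =>
              (u y t ^ 3 - (1 / (2 * π)) * ∫ z in (0:ℝ)..(2 * π), u z t ^ 3) *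
                deriv (fun w => u w t) y) n * Complex.exp (Complex.I * n * x)) :
    ∀ t₁ t₂ : ℝ,
      (∫ x in (0:ℝ)..(2 * π), u x t₁ ^ 2) = ∫ x in (0:ℝ)..(2 * π), u x t₂ ^ 2 :=
  l2_conserved_truncated_gkdv_general N u hsmooth hper hEN hPDE
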